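/- arXiv:2007.08715 — 4 statements merged into one kernel-verified Lean document; each statement's English description precedes it below -/
import Mathlib

section
/- Let m ≥ 1 and let M : ZMod m → ZMod 3 be a cyclic word of length m over the three letters 0, 1, 2. Then the three signed transition counts coincide: deg_{01}(M) = deg_{12}(M) = deg_{20}(M). (In the paper's notation with letters A, B, C: the degree of the cyclic word M, defined as the number of consecutive pairs AB minus the number of consecutive pairs BA read cyclically, is unchanged if the pair AB is replaced by BC or by CA.) -/
/-- The signed transition count `deg_{ij}(M)` of a cyclic word `M : ZMod m → ZMod 3`:
the number of positions `t` with `M t = i` and `M (t+1) = j`, minus the number of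
positions `t` with `M t = j` and `M (t+1) = i`. -/
def cyclicDegIJ (m : ℕ) (hm : 1 ≤ m) (M : ZMod m → ZMod 3) (i j : ZMod 3) : ℤ :=
  haveI : NeZero m := ⟨by omega⟩
  ((Finset.univ.filter fun t : ZMod m => M t = i ∧ M (t + 1) = j).card : ℤ) -
    ((Finset.univ.filter fun t : ZMod m => M t = j ∧ M (t + 1) = i).card : ℤ)

/-- for any cyclic word over three letters, the three signed transition
counts coincide: `deg_{01}(M) = deg_{12}(M) = deg_{20}(M)`. -/
theorem cyclicDegIJ_eq_of_succ (m : ℕ) (hm : 1 ≤ m) (M : ZMod m → ZMod 3) :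
    cyclicDegIJ m hm M 0 1 = cyclicDegIJ m hm M 1 2 ∧
      cyclicDegIJ m hm M 1 2 = cyclicDegIJ m hm M 2 0 := by
  haveI : NeZero m := ⟨by omega⟩
  set c : ZMod 3 → ZMod 3 → ℕ := fun i j =>
    (Finset.univ.filter fun t : ZMod m => M t = i ∧ M (t + 1) = j).card with hc
  -- row sums
  have row : ∀ i : ZMod 3, c i 0 + c i 1 + c i 2 =
      (Finset.univ.filter fun t : ZMod m => M t = i).card := by
    intro i
    simp only [hc, Finset.card_filter]
    rw [← Finset.sum_add_distrib, ← Finset.sum_add_distrib]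
    apply Finset.sum_congr rfl
    intro t _
    by_cases h : M t = i
    · simp only [h, true_and, if_true]
      generalize M (t + 1) = a
      revert a; decide
    · simp [h]
  -- column sums
  have shift : ∀ j : ZMod 3,
      (Finset.univ.filter fun t : ZMod m => M (t + 1) = j).card =
      (Finset.univ.filter fun t : ZMod m => M t = j).card := by
    intro j
    exact Finset.card_equiv (Equiv.addRight (1 : ZMod m)) (by simp)
  have col : ∀ j : ZMod 3, c 0 j + c 1 j + c 2 j =
      (Finset.univ.filter fun t : ZMod m => M t = j).card := by
    intro j
    rw [← shift j]
    simp only [hc, Finset.card_filter]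
    rw [← Finset.sum_add_distrib, ← Finset.sum_add_distrib]
    apply Finset.sum_congr rfl
    intro t _
    by_cases h : M (t + 1) = j
    · simp only [h, and_true, if_true]
      generalize M t = a
      revert a; decide
    · simp [h]
  have h1 := (row 1).trans (col 1).symm
  have h2 := (row 2).trans (col 2).symm
  have e1 : cyclicDegIJ m hm M 0 1 = (c 0 1 : ℤ) - c 1 0 := rfl
  have e2 : cyclicDegIJ m hm M 1 2 = (c 1 2 : ℤ) - c 2 1 := rfl
  have e3 : cyclicDegIJ m hm M 2 0 = (c 2 0 : ℤ) - c 0 2 := rfl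
  rw [e1, e2, e3]
  constructor <;> omega
end

section
/- Let m ≥ 1 and let M : ZMod m → ZMod 3 be a cyclic word of length m over three letters. Then 3 · |deg(M)| ≤ m; equivalently, a cyclic word of degree d (in absolute value) must have length at least 3|d|, and the maximum possible degree of a cyclic word of length m is ⌊m/3⌋. -/
/-- The degree of a cyclic word: `deg(M) := deg_{01}(M)`. -/
def cyclicDeg (m : ℕ) (hm : 1 ≤ m) (M : ZMod m → ZMod 3) : ℤ :=
  cyclicDegIJ m hm M 0 1

/-- a cyclic word of length `m` over three letters has degree at most
`⌊m/3⌋` in absolute value: `3 * |deg(M)| ≤ m`. -/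
theorem three_mul_abs_cyclicDeg_le (m : ℕ) (hm : 1 ≤ m) (M : ZMod m → ZMod 3) :
    3 * |cyclicDeg m hm M| ≤ (m : ℤ) := by
  haveI : NeZero m := ⟨by omega⟩
  classical
  set n : ZMod 3 → ZMod 3 → ℕ := fun i j =>
    (Finset.univ.filter fun t : ZMod m => M t = i ∧ M (t + 1) = j).card with hn
  have h3 : ∀ x : ZMod 3, x = 0 ∨ x = 1 ∨ x = 2 := by decide
  have hrow : ∀ i : ZMod 3, n i 0 + n i 1 + n i 2
      = (Finset.univ.filter fun t : ZMod m => M t = i).card := by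
    intro i
    simp only [hn, Finset.card_filter]
    rw [← Finset.sum_add_distrib, ← Finset.sum_add_distrib]
    apply Finset.sum_congr rfl
    intro t _
    rcases h3 (M (t + 1)) with h | h | h <;>
      rcases eq_or_ne (M t) i with h' | h' <;> simp [h, h'] <;> decide
  have hcol : ∀ i : ZMod 3, n 0 i + n 1 i + n 2 i
      = (Finset.univ.filter fun t : ZMod m => M (t + 1) = i).card := by
    intro i
    simp only [hn, Finset.card_filter]
    rw [← Finset.sum_add_distrib, ← Finset.sum_add_distrib]
    apply Finset.sum_congr rfl
    intro t _
    rcases h3 (M t) with h | h | h <;>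
      rcases eq_or_ne (M (t + 1)) i with h' | h' <;> simp [h, h'] <;> decide
  have hshift : ∀ i : ZMod 3,
      (Finset.univ.filter fun t : ZMod m => M (t + 1) = i).card
        = (Finset.univ.filter fun t : ZMod m => M t = i).card := by
    intro i
    apply Finset.card_equiv (Equiv.addRight (1 : ZMod m))
    intro t
    simp [Equiv.addRight]
  have htot : (Finset.univ.filter fun t : ZMod m => M t = 0).card
      + (Finset.univ.filter fun t : ZMod m => M t = 1).card
      + (Finset.univ.filter fun t : ZMod m => M t = 2).card = m := by
    simp only [Finset.card_filter]
    rw [← Finset.sum_add_distrib, ← Finset.sum_add_distrib]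
    have : ∀ t : ZMod m, (if M t = 0 then 1 else 0) + (if M t = 1 then 1 else 0)
        + (if M t = 2 then 1 else 0) = 1 := by
      intro t
      rcases h3 (M t) with h | h | h <;> simp [h] <;> decide
    rw [Finset.sum_congr rfl fun t _ => this t]
    simp [ZMod.card]
  have e0 : n 0 0 + n 0 1 + n 0 2 = n 0 0 + n 1 0 + n 2 0 := by
    rw [hrow 0, hcol 0, hshift 0]
  have e1 : n 1 0 + n 1 1 + n 1 2 = n 0 1 + n 1 1 + n 2 1 := by
    rw [hrow 1, hcol 1, hshift 1]
  have hsum : n 0 0 + n 0 1 + n 0 2 + (n 1 0 + n 1 1 + n 1 2)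
      + (n 2 0 + n 2 1 + n 2 2) = m := by
    rw [hrow 0, hrow 1, hrow 2, htot]
  have hdeg : cyclicDeg m hm M = (n 0 1 : ℤ) - (n 1 0 : ℤ) := rfl
  rw [hdeg]
  rcases abs_cases ((n 0 1 : ℤ) - (n 1 0 : ℤ)) with ⟨h, _⟩ | ⟨h, _⟩ <;> rw [h] <;> omega
end

section
/- Let n ≥ 1, let m = 3n, and let M : ZMod (3n) → ZMod 3 be a cyclic word of length 3n over three letters with deg(M) = n (i.e., attaining the maximal degree for its length). Then M(t+1) = M(t) + 1 for every t : ZMod (3n); that is, M is, up to a cyclic rotation, the periodic word ABCABC...ABC, and every consecutive triple of letters of M is a full (rainbow) triple containing all three letters. -/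
/-- Pointwise weight: contribution of a transition `(a, b)` to `deg_{ij}`. -/
def cwW (i j a b : ZMod 3) : ℤ :=
  (if a = i ∧ b = j then 1 else 0) - (if a = j ∧ b = i then 1 else 0)

lemma degIJ_eq_sum (m : ℕ) (hm : 1 ≤ m) [NeZero m] (M : ZMod m → ZMod 3) (i j : ZMod 3) :
    cyclicDegIJ m hm M i j = ∑ t : ZMod m, cwW i j (M t) (M (t + 1)) := by
  unfold cyclicDegIJ cwW
  rw [Finset.sum_sub_distrib]
  congr 1 <;> rw [Finset.card_filter] <;> push_cast <;> rfl

lemma telescope (m : ℕ) [NeZero m] (M : ZMod m → ZMod 3) (ψ : ZMod 3 → ℤ) :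
    ∑ t : ZMod m, (ψ (M (t + 1)) - ψ (M t)) = 0 := by
  rw [Finset.sum_sub_distrib]
  have := Equiv.sum_comp (Equiv.addRight (1 : ZMod m)) (fun t => ψ (M t))
  simp only [Equiv.coe_addRight] at this
  rw [this, sub_self]

lemma deg_shift (m : ℕ) (hm : 1 ≤ m) [NeZero m] (M : ZMod m → ZMod 3) (i : ZMod 3) :
    cyclicDegIJ m hm M i (i + 1) = cyclicDegIJ m hm M (i + 1) (i + 2) := by
  have key : ∀ a b : ZMod 3, cwW i (i + 1) a b - cwW (i + 1) (i + 2) a b =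
      (fun x : ZMod 3 => if x = i + 1 then (1 : ℤ) else 0) b -
      (fun x : ZMod 3 => if x = i + 1 then (1 : ℤ) else 0) a := by
    revert i; decide
  have h := telescope m M (fun x : ZMod 3 => if x = i + 1 then (1 : ℤ) else 0)
  rw [degIJ_eq_sum, degIJ_eq_sum, ← sub_eq_zero, ← Finset.sum_sub_distrib, ← h]
  exact Finset.sum_congr rfl fun t _ => key (M t) (M (t + 1))

/-- equality case: a cyclic word of length `3n` of maximal degree `n`
satisfies `M (t+1) = M t + 1` for all `t`, i.e. it is, up to rotation, the periodic
word `ABCABC...ABC`. -/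
theorem cyclicDeg_eq_max_imp_periodic (n : ℕ) (hn : 1 ≤ n)
    (M : ZMod (3 * n) → ZMod 3)
    (hdeg : cyclicDeg (3 * n) (by omega) M = n) :
    ∀ t : ZMod (3 * n), M (t + 1) = M t + 1 := by
  haveI : NeZero (3 * n) := ⟨by omega⟩
  have hm : 1 ≤ 3 * n := by omega
  have h01 : cyclicDegIJ (3 * n) hm M 0 1 = n := hdeg
  have h12 : cyclicDegIJ (3 * n) hm M 1 2 = n := by
    have := deg_shift (3 * n) hm M 0
    norm_num at this; rw [← this]; exact h01
  have h20 : cyclicDegIJ (3 * n) hm M 2 0 = n := by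
    have h := deg_shift (3 * n) hm M 1
    rw [show ((1 : ZMod 3) + 1) = 2 by decide, show ((1 : ZMod 3) + 2) = 0 by decide] at h
    rw [← h]; exact h12
  -- total sum
  have hsum : ∑ t : ZMod (3 * n),
      (cwW 0 1 (M t) (M (t + 1)) + cwW 1 2 (M t) (M (t + 1)) + cwW 2 0 (M t) (M (t + 1)))
      = 3 * n := by
    rw [Finset.sum_add_distrib, Finset.sum_add_distrib,
      ← degIJ_eq_sum (3 * n) hm, ← degIJ_eq_sum (3 * n) hm, ← degIJ_eq_sum (3 * n) hm,
      h01, h12, h20]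
    ring
  set D : ZMod 3 → ZMod 3 → ℤ := fun a b => cwW 0 1 a b + cwW 1 2 a b + cwW 2 0 a b with hD
  have hle : ∀ a b : ZMod 3, D a b ≤ 1 := by decide
  have heq1 : ∀ a b : ZMod 3, D a b = 1 → b = a + 1 := by decide
  have hcard : (Finset.univ : Finset (ZMod (3 * n))).card = 3 * n := by
    simp [ZMod.card]
  have hzero : ∑ t : ZMod (3 * n), (1 - D (M t) (M (t + 1))) = 0 := by
    rw [Finset.sum_sub_distrib, Finset.sum_const, hcard, hsum]
    ring
  have hall := (Finset.sum_eq_zero_iff_of_nonneg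
    (fun t _ => by have := hle (M t) (M (t + 1)); omega)).mp hzero
  intro t
  have := hall t (Finset.mem_univ t)
  exact heq1 (M t) (M (t + 1)) (by omega)
end

section
/- Let m ≥ 1 and let M : ZMod m → ZMod 3 be a cyclic word of length m over three letters. Then each letter occurs at least |deg(M)| times in M: for every i ∈ ZMod 3, the number of t : ZMod m with M(t) = i is at least |deg(M)|. -/
/-- The number of occurrences of the letter `i` in the cyclic word `M`. -/
def letterCount (m : ℕ) (hm : 1 ≤ m) (M : ZMod m → ZMod 3) (i : ZMod 3) : ℕ :=
  haveI : NeZero m := ⟨by omega⟩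
  (Finset.univ.filter fun t : ZMod m => M t = i).card

/-!
An occurrence of the letter `a` at position `t` is the start of at most one `a → b` transition
(at `t`) and the end of at most one `b → a` transition (at `t - 1`), so the net number of
`a → b` transitions is bounded by the number of occurrences of `a`, and also of `b`. This covers
the letters `0` and `1`. For the letter `2`, flow conservation at `1` (every occurrence of `1` is
entered once and left once) gives `deg₀₁ = deg₁₂`.
-/

open Finset

namespace CyclicWord

variable {m : ℕ} [NeZero m] {α : Type*} [DecidableEq α] (M : ZMod m → α)

def transitionCount (a b : α) : ℕ := #{t | M t = a ∧ M (t + 1) = b}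

def occurrences (a : α) : ℕ := #{t | M t = a}

def netTransitions (a b : α) : ℤ := transitionCount M a b - transitionCount M b a

lemma transitionCount_le_occurrences_left (a b : α) :
    transitionCount M a b ≤ occurrences M a :=
  card_le_card fun _ => by simp +contextual

lemma transitionCount_le_occurrences_right (a b : α) :
    transitionCount M a b ≤ occurrences M b :=
  card_le_card_of_injOn (· + 1) (fun _ => by simp +contextual)
    (add_left_injective 1).injOn

lemma occurrences_comp_add_one (a : α) : #{t | M (t + 1) = a} = occurrences M a :=
  card_bij (fun t _ => t + 1) (by simp) (by simp) fun t ht => ⟨t - 1, by simpa using ht, by simp⟩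

lemma sum_transitionCount_left [Fintype α] (b : α) :
    ∑ a, transitionCount M a b = occurrences M b := by
  rw [← occurrences_comp_add_one, card_eq_sum_card_fiberwise (f := M) (t := univ) (by simp)]
  simp only [transitionCount, filter_filter, and_comm]

lemma sum_transitionCount_right [Fintype α] (a : α) :
    ∑ b, transitionCount M a b = occurrences M a := by
  rw [occurrences, card_eq_sum_card_fiberwise (f := fun t => M (t + 1)) (t := univ) (by simp)]
  simp only [transitionCount, filter_filter]

lemma sum_netTransitions [Fintype α] (b : α) : ∑ a, netTransitions M a b = 0 := by
  simp only [netTransitions, sum_sub_distrib, ← Nat.cast_sum, sum_transitionCount_left,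
    sum_transitionCount_right, sub_self]

lemma netTransitions_swap (a b : α) : netTransitions M b a = -netTransitions M a b := by
  simp only [netTransitions, neg_sub]

lemma abs_netTransitions_le_occurrences (a b : α) : |netTransitions M a b| ≤ occurrences M a := by
  have := transitionCount_le_occurrences_left M a b
  have := transitionCount_le_occurrences_right M b a
  rw [netTransitions, abs_le]
  constructor <;> omega

lemma netTransitions_zero_one_eq_one_two (M : ZMod m → ZMod 3) :
    netTransitions M 0 1 = netTransitions M 1 2 := by
  have h := sum_netTransitions M 1
  rw [show (univ : Finset (ZMod 3)) = {0, 1, 2} by decide, sum_insert (by decide),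
    sum_pair (by decide), netTransitions_swap M 1 2] at h
  simp only [netTransitions, sub_self] at h ⊢
  omega

end CyclicWord

open CyclicWord

/-- each of the three letters occurs at least `|deg(M)|` times in a
cyclic word `M` over three letters. -/
theorem abs_cyclicDeg_le_letterCount (m : ℕ) (hm : 1 ≤ m) (M : ZMod m → ZMod 3) :
    ∀ i : ZMod 3, |cyclicDeg m hm M| ≤ (letterCount m hm M i : ℤ) := by
  have : NeZero m := ⟨by omega⟩
  intro i
  change |netTransitions M 0 1| ≤ (occurrences M i : ℤ)
  fin_cases i
  · exact abs_netTransitions_le_occurrences M 0 1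
  · rw [← abs_neg, ← netTransitions_swap]
    exact abs_netTransitions_le_occurrences M 1 0
  · rw [netTransitions_zero_one_eq_one_two, ← abs_neg, ← netTransitions_swap]
    exact abs_netTransitions_le_occurrences M 2 1
end
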